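/- arXiv:1211.1622 — 7 statements merged into one kernel-verified Lean document; each statement's English description precedes it below -/
import Mathlib

section
/- For 0 ≤ ᾱ ≤ 1, the region {(d₁,d₂) : d₁ ≥ 0, d₂ ≥ 0, d₁ ≤ 1, d₂ ≤ 1, 2d₁+d₂ ≤ 2+ᾱ, 2d₂+d₁ ≤ 2+ᾱ} equals the convex hull of the points (0,0), (0,1), (ᾱ,1), ((2+ᾱ)/3, (2+ᾱ)/3), (1,ᾱ), (1,0). -/
set_option maxHeartbeats 1000000

/-- A convex set contains every convex combination of three of its points. -/
lemma combo3 {S : Set (ℝ × ℝ)} (hS : Convex ℝ S) {v1 v2 v3 : ℝ × ℝ}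
    (h1 : v1 ∈ S) (h2 : v2 ∈ S) (h3 : v3 ∈ S) {c1 c2 c3 : ℝ}
    (hc1 : 0 ≤ c1) (hc2 : 0 ≤ c2) (hc3 : 0 ≤ c3) (hsum : c1 + c2 + c3 = 1) :
    c1 • v1 + c2 • v2 + c3 • v3 ∈ S := by
  have h12 : 0 ≤ c1 + c2 := by linarith
  by_cases h : c1 + c2 = 0
  · have e1 : c1 = 0 := by linarith
    have e2 : c2 = 0 := by linarith
    have e3 : c3 = 1 := by linarith
    simpa [e1, e2, e3] using h3
  · have hpos : 0 < c1 + c2 := lt_of_le_of_ne h12 (Ne.symm h)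
    have hq : (c1 / (c1 + c2)) • v1 + (c2 / (c1 + c2)) • v2 ∈ S :=
      hS h1 h2 (by positivity) (by positivity) (by field_simp)
    have h' := hS hq h3 h12 hc3 hsum
    have e : (c1 + c2) • ((c1 / (c1 + c2)) • v1 + (c2 / (c1 + c2)) • v2)
        = c1 • v1 + c2 • v2 := by
      rw [smul_add, smul_smul, smul_smul]
      congr 1 <;> congr 1 <;> field_simp
    rwa [e] at h'

theorem stmt_1 (a : ℝ) (h0 : 0 ≤ a) (h1 : a ≤ 1) :
    {p : ℝ × ℝ | 0 ≤ p.1 ∧ 0 ≤ p.2 ∧ p.1 ≤ 1 ∧ p.2 ≤ 1 ∧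
      2 * p.1 + p.2 ≤ 2 + a ∧ 2 * p.2 + p.1 ≤ 2 + a} =
    convexHull ℝ ({(0, 0), (0, 1), (a, 1), ((2 + a) / 3, (2 + a) / 3), (1, a), (1, 0)} :
      Set (ℝ × ℝ)) := by
  have hd : (0:ℝ) < 2 + a := by linarith
  set V : Set (ℝ × ℝ) :=
    {(0, 0), (0, 1), (a, 1), ((2 + a) / 3, (2 + a) / 3), (1, a), (1, 0)} with hV
  have hconv : Convex ℝ (convexHull ℝ V) := convex_convexHull ℝ V
  have mA : ((0:ℝ), (0:ℝ)) ∈ convexHull ℝ V := subset_convexHull ℝ V (by simp [hV])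
  have mB : ((0:ℝ), (1:ℝ)) ∈ convexHull ℝ V := subset_convexHull ℝ V (by simp [hV])
  have mC : (a, (1:ℝ)) ∈ convexHull ℝ V := subset_convexHull ℝ V (by simp [hV])
  have mD : ((2 + a) / 3, (2 + a) / 3) ∈ convexHull ℝ V := subset_convexHull ℝ V (by simp [hV])
  have mE : ((1:ℝ), a) ∈ convexHull ℝ V := subset_convexHull ℝ V (by simp [hV])
  have mF : ((1:ℝ), (0:ℝ)) ∈ convexHull ℝ V := subset_convexHull ℝ V (by simp [hV])
  apply Set.Subset.antisymm
  · rintro ⟨x, y⟩ hp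
    obtain ⟨hx0, hy0, hx1, hy1, hxy, hyx⟩ := hp
    simp only at hx0 hy0 hx1 hy1 hxy hyx
    rcases le_total y x with hle | hle
    · -- lower triangle: use A, F, E, D
      rcases le_or_gt ((2 + a) * x + (1 - a) * y) (2 + a) with hcase | hcase
      · -- triangle A, F, D
        have key := combo3 hconv mA mF mD
          (c1 := 1 - (x - y) - 3 * y / (2 + a)) (c2 := x - y) (c3 := 3 * y / (2 + a))
          (by
            have : 3 * y / (2 + a) ≤ 1 - (x - y) := by
              rw [div_le_iff₀ hd]; nlinarith
            linarith)
          (by linarith) (by positivity) (by ring)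
        have hpe : ((x, y) : ℝ × ℝ) =
            (1 - (x - y) - 3 * y / (2 + a)) • ((0:ℝ), (0:ℝ)) + (x - y) • ((1:ℝ), (0:ℝ)) +
              (3 * y / (2 + a)) • ((2 + a) / 3, (2 + a) / 3) := by
          simp only [Prod.smul_mk, Prod.mk_add_mk, smul_eq_mul, Prod.mk.injEq]
          constructor <;> field_simp <;> ring
        rw [hpe]; exact key
      · -- region beyond line F–D
        rcases eq_or_lt_of_le h1 with ha1 | ha1
        · -- a = 1 : then x = 1, segment F–E
          have hx : x = 1 := by nlinarith [hcase]
          have key := combo3 hconv mF mE mA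
            (c1 := 1 - y) (c2 := y) (c3 := 0)
            (by linarith) (by linarith) (by norm_num) (by ring)
          have hpe : ((x, y) : ℝ × ℝ) =
              (1 - y) • ((1:ℝ), (0:ℝ)) + y • ((1:ℝ), a) + (0:ℝ) • ((0:ℝ), (0:ℝ)) := by
            simp only [Prod.smul_mk, Prod.mk_add_mk, smul_eq_mul, Prod.mk.injEq]
            constructor <;> nlinarith [hx, ha1]
          rw [hpe]; exact key
        · rcases eq_or_lt_of_le h0 with ha0 | ha0
          · -- a = 0 : on segment F–D
            have hyy : 2 * x + y = 2 := by nlinarith [hcase, hxy]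
            have key := combo3 hconv mF mD mA
              (c1 := 3 * x - 2) (c2 := 3 * (1 - x)) (c3 := 0)
              (by nlinarith) (by linarith) (by norm_num) (by ring)
            have hpe : ((x, y) : ℝ × ℝ) =
                (3 * x - 2) • ((1:ℝ), (0:ℝ)) + (3 * (1 - x)) • ((2 + a) / 3, (2 + a) / 3) +
                  (0:ℝ) • ((0:ℝ), (0:ℝ)) := by
              simp only [Prod.smul_mk, Prod.mk_add_mk, smul_eq_mul, Prod.mk.injEq]
              constructor <;> nlinarith [hyy, ha0]
            rw [hpe]; exact key
          · -- 0 < a < 1 : triangle F, E, D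
            have h1a : (0:ℝ) < 1 - a := by linarith
            have key := combo3 hconv mF mE mD
              (c1 := 1 - ((2 + a) * x + (1 - a) * y - (2 + a)) / (a * (1 - a))
                    - 3 * (1 - x) / (1 - a))
              (c2 := ((2 + a) * x + (1 - a) * y - (2 + a)) / (a * (1 - a)))
              (c3 := 3 * (1 - x) / (1 - a))
              (by
                have hq1 : ((2 + a) * x + (1 - a) * y - (2 + a)) / (a * (1 - a))
                    + 3 * (1 - x) / (1 - a) ≤ 1 := by
                  rw [div_add_div _ _ (ne_of_gt (mul_pos ha0 h1a)) (ne_of_gt h1a),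
                    div_le_one (mul_pos (mul_pos ha0 h1a) h1a)]
                  nlinarith [mul_nonneg (mul_nonneg h1a.le h1a.le)
                    (by linarith : (0:ℝ) ≤ 2 + a - 2 * x - y)]
                linarith)
              (div_nonneg (by linarith) (le_of_lt (mul_pos ha0 h1a)))
              (div_nonneg (by linarith) h1a.le) (by ring)
            have hpe : ((x, y) : ℝ × ℝ) =
                (1 - ((2 + a) * x + (1 - a) * y - (2 + a)) / (a * (1 - a))
                    - 3 * (1 - x) / (1 - a)) • ((1:ℝ), (0:ℝ)) +
                  (((2 + a) * x + (1 - a) * y - (2 + a)) / (a * (1 - a))) • ((1:ℝ), a) +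
                  (3 * (1 - x) / (1 - a)) • ((2 + a) / 3, (2 + a) / 3) := by
              simp only [Prod.smul_mk, Prod.mk_add_mk, smul_eq_mul, Prod.mk.injEq]
              constructor <;> field_simp <;> ring
            rw [hpe]; exact key
    · -- upper triangle: use A, B, C, D (mirror case)
      rcases le_or_gt ((2 + a) * y + (1 - a) * x) (2 + a) with hcase | hcase
      · have key := combo3 hconv mA mB mD
          (c1 := 1 - (y - x) - 3 * x / (2 + a)) (c2 := y - x) (c3 := 3 * x / (2 + a))
          (by
            have : 3 * x / (2 + a) ≤ 1 - (y - x) := by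
              rw [div_le_iff₀ hd]; nlinarith
            linarith)
          (by linarith) (by positivity) (by ring)
        have hpe : ((x, y) : ℝ × ℝ) =
            (1 - (y - x) - 3 * x / (2 + a)) • ((0:ℝ), (0:ℝ)) + (y - x) • ((0:ℝ), (1:ℝ)) +
              (3 * x / (2 + a)) • ((2 + a) / 3, (2 + a) / 3) := by
          simp only [Prod.smul_mk, Prod.mk_add_mk, smul_eq_mul, Prod.mk.injEq]
          constructor <;> field_simp <;> ring
        rw [hpe]; exact key
      · rcases eq_or_lt_of_le h1 with ha1 | ha1
        · have hy : y = 1 := by nlinarith [hcase]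
          have key := combo3 hconv mB mC mA
            (c1 := 1 - x) (c2 := x) (c3 := 0)
            (by linarith) (by linarith) (by norm_num) (by ring)
          have hpe : ((x, y) : ℝ × ℝ) =
              (1 - x) • ((0:ℝ), (1:ℝ)) + x • (a, (1:ℝ)) + (0:ℝ) • ((0:ℝ), (0:ℝ)) := by
            simp only [Prod.smul_mk, Prod.mk_add_mk, smul_eq_mul, Prod.mk.injEq]
            constructor <;> nlinarith [hy, ha1]
          rw [hpe]; exact key
        · rcases eq_or_lt_of_le h0 with ha0 | ha0
          · have hxx : 2 * y + x = 2 := by nlinarith [hcase, hyx]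
            have key := combo3 hconv mB mD mA
              (c1 := 3 * y - 2) (c2 := 3 * (1 - y)) (c3 := 0)
              (by nlinarith) (by linarith) (by norm_num) (by ring)
            have hpe : ((x, y) : ℝ × ℝ) =
                (3 * y - 2) • ((0:ℝ), (1:ℝ)) + (3 * (1 - y)) • ((2 + a) / 3, (2 + a) / 3) +
                  (0:ℝ) • ((0:ℝ), (0:ℝ)) := by
              simp only [Prod.smul_mk, Prod.mk_add_mk, smul_eq_mul, Prod.mk.injEq]
              constructor <;> nlinarith [hxx, ha0]
            rw [hpe]; exact key
          · have h1a : (0:ℝ) < 1 - a := by linarith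
            have key := combo3 hconv mB mC mD
              (c1 := 1 - ((2 + a) * y + (1 - a) * x - (2 + a)) / (a * (1 - a))
                    - 3 * (1 - y) / (1 - a))
              (c2 := ((2 + a) * y + (1 - a) * x - (2 + a)) / (a * (1 - a)))
              (c3 := 3 * (1 - y) / (1 - a))
              (by
                have hq1 : ((2 + a) * y + (1 - a) * x - (2 + a)) / (a * (1 - a))
                    + 3 * (1 - y) / (1 - a) ≤ 1 := by
                  rw [div_add_div _ _ (ne_of_gt (mul_pos ha0 h1a)) (ne_of_gt h1a),
                    div_le_one (mul_pos (mul_pos ha0 h1a) h1a)]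
                  nlinarith [mul_nonneg (mul_nonneg h1a.le h1a.le)
                    (by linarith : (0:ℝ) ≤ 2 + a - 2 * y - x)]
                linarith)
              (div_nonneg (by linarith) (le_of_lt (mul_pos ha0 h1a)))
              (div_nonneg (by linarith) h1a.le) (by ring)
            have hpe : ((x, y) : ℝ × ℝ) =
                (1 - ((2 + a) * y + (1 - a) * x - (2 + a)) / (a * (1 - a))
                    - 3 * (1 - y) / (1 - a)) • ((0:ℝ), (1:ℝ)) +
                  (((2 + a) * y + (1 - a) * x - (2 + a)) / (a * (1 - a))) • (a, (1:ℝ)) +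
                  (3 * (1 - y) / (1 - a)) • ((2 + a) / 3, (2 + a) / 3) := by
              simp only [Prod.smul_mk, Prod.mk_add_mk, smul_eq_mul, Prod.mk.injEq]
              constructor <;> field_simp <;> ring
            rw [hpe]; exact key
  · -- easy direction
    apply convexHull_min
    · rintro q hq
      simp only [hV, Set.mem_insert_iff, Set.mem_singleton_iff] at hq
      rcases hq with rfl | rfl | rfl | rfl | rfl | rfl <;>
        refine ⟨by norm_num <;> linarith, by norm_num <;> linarith, by norm_num <;> linarith,
          by norm_num <;> linarith, by norm_num <;> linarith, by norm_num <;> linarith⟩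
    · rintro ⟨px, py⟩ hp ⟨qx, qy⟩ hq u v hu hv huv
      obtain ⟨hp1, hp2, hp3, hp4, hp5, hp6⟩ := hp
      obtain ⟨hq1, hq2, hq3, hq4, hq5, hq6⟩ := hq
      simp only at hp1 hp2 hp3 hp4 hp5 hp6 hq1 hq2 hq3 hq4 hq5 hq6
      refine ⟨?_, ?_, ?_, ?_, ?_, ?_⟩ <;>
          simp only [Prod.smul_mk, Prod.mk_add_mk, smul_eq_mul]
      · exact add_nonneg (mul_nonneg hu hp1) (mul_nonneg hv hq1)
      · exact add_nonneg (mul_nonneg hu hp2) (mul_nonneg hv hq2)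
      · nlinarith [mul_le_mul_of_nonneg_left hp3 hu, mul_le_mul_of_nonneg_left hq3 hv]
      · nlinarith [mul_le_mul_of_nonneg_left hp4 hu, mul_le_mul_of_nonneg_left hq4 hv]
      · nlinarith [mul_le_mul_of_nonneg_left hp5 hu, mul_le_mul_of_nonneg_left hq5 hv]
      · nlinarith [mul_le_mul_of_nonneg_left hp6 hu, mul_le_mul_of_nonneg_left hq6 hv]
end

section
/- For 0 ≤ ᾱ ≤ β ≤ 1 with β < (1+2ᾱ)/3, the region {(d₁,d₂) : d₁,d₂ ≥ 0, d₁ ≤ 1, d₂ ≤ 1, 2d₁+d₂ ≤ 2+ᾱ, 2d₂+d₁ ≤ 2+ᾱ, d₁+d₂ ≤ 1+β} equals the convex hull of the points (0,0), (0,1), (ᾱ,1), (2β−ᾱ, 1+ᾱ−β), (1+ᾱ−β, 2β−ᾱ), (1,ᾱ), (1,0). -/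
/-!
The inequalities cut out an intersection of half-planes, which is convex and contains the seven
points. Conversely, the rays from the origin through the vertices fan the region into five
triangles `0 u v` whose outer edge `u v` lies on one of the constraint lines `c₁ x + c₂ y = c`.
A point `p` of such a sector is `s • u + t • v` with `s, t ≥ 0` by Cramer's rule, and applying
the constraint gives `(s + t) c = c₁ p.1 + c₂ p.2 ≤ c`, so `p` lies in the triangle. Vertices
coincide when `a = 0` or `a = b`; then the sector degenerates to a segment.
-/

theorem smul_add_smul_mem_convexHull_zero_pair {E : Type*} [AddCommGroup E] [Module ℝ E]
    {u v : E} {s t : ℝ} (hs : 0 ≤ s) (ht : 0 ≤ t) (hst : s + t ≤ 1) :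
    s • u + t • v ∈ convexHull ℝ {0, u, v} := by
  have h := (convex_convexHull ℝ ({0, u, v} : Set E)).sum_mem (t := Finset.univ)
    (w := ![1 - s - t, s, t]) (z := ![0, u, v])
    (fun i _ => by fin_cases i <;> simp <;> linarith) (by simp [Fin.sum_univ_three]; ring)
    (fun i _ => subset_convexHull ℝ _ (by fin_cases i <;> simp))
  simpa [Fin.sum_univ_three] using h

def wedge (u v : ℝ × ℝ) : ℝ := u.1 * v.2 - u.2 * v.1

theorem eq_smul_of_wedge_eq_zero {u p : ℝ × ℝ} {c₁ c₂ c : ℝ} (hc : c ≠ 0)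
    (hu : c₁ * u.1 + c₂ * u.2 = c) (hup : wedge u p = 0) :
    p = ((c₁ * p.1 + c₂ * p.2) / c) • u := by
  unfold wedge at hup
  ext <;> simp only [Prod.smul_fst, Prod.smul_snd, smul_eq_mul] <;>
    rw [div_mul_eq_mul_div, eq_div_iff hc, ← hu]
  · linear_combination -c₂ * hup
  · linear_combination c₁ * hup

theorem mem_convexHull_zero_pair_of_wedge_nonneg {u v p : ℝ × ℝ} {c₁ c₂ c : ℝ}
    (hc : 0 < c) (hu : c₁ * u.1 + c₂ * u.2 = c) (hv : c₁ * v.1 + c₂ * v.2 = c)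
    (hp₀ : 0 ≤ c₁ * p.1 + c₂ * p.2) (hp : c₁ * p.1 + c₂ * p.2 ≤ c)
    (huv : 0 ≤ wedge u v) (hup : 0 ≤ wedge u p) (hpv : 0 ≤ wedge p v) :
    p ∈ convexHull ℝ {0, u, v} := by
  rcases huv.eq_or_lt with huv | huv
  · -- parallel vectors on the same line `c₁ x + c₂ y = c ≠ 0` are equal
    obtain rfl : v = u := by
      simpa [hv, hc.ne'] using eq_smul_of_wedge_eq_zero hc.ne' hu huv.symm
    have hvp : wedge v p = 0 := le_antisymm (by unfold wedge at hpv ⊢; linarith) hup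
    have hmem := smul_add_smul_mem_convexHull_zero_pair (u := v) (v := v)
      (div_nonneg hp₀ hc.le) le_rfl (by simpa using div_le_one_of_le₀ hp hc.le)
    rwa [zero_smul, add_zero, ← eq_smul_of_wedge_eq_zero hc.ne' hu hvp] at hmem
  · have hp_eq : p = (wedge p v / wedge u v) • u + (wedge u p / wedge u v) • v := by
      ext <;>
        simp only [Prod.fst_add, Prod.snd_add, Prod.smul_fst, Prod.smul_snd, smul_eq_mul] <;>
        rw [div_mul_eq_mul_div, div_mul_eq_mul_div, ← add_div, eq_div_iff huv.ne'] <;>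
        unfold wedge <;> ring
    have cramer : (wedge p v + wedge u p) * c = (c₁ * p.1 + c₂ * p.2) * wedge u v := by
      rw [add_mul]; nth_rewrite 1 [← hu]; rw [← hv]; unfold wedge; ring
    rw [hp_eq]
    refine smul_add_smul_mem_convexHull_zero_pair (div_nonneg hpv huv.le)
      (div_nonneg hup huv.le) ?_
    rw [← add_div, div_le_one huv]
    refine le_of_mul_le_mul_right ?_ hc
    rw [cramer, mul_comm (wedge u v)]
    exact mul_le_mul_of_nonneg_right hp huv.le

def dofRegion (a b : ℝ) : Set (ℝ × ℝ) :=
  {p | 0 ≤ p.1 ∧ 0 ≤ p.2 ∧ p.1 ≤ 1 ∧ p.2 ≤ 1 ∧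
    2 * p.1 + p.2 ≤ 2 + a ∧ 2 * p.2 + p.1 ≤ 2 + a ∧ p.1 + p.2 ≤ 1 + b}

def dofVertices (a b : ℝ) : Set (ℝ × ℝ) :=
  {(0, 0), (0, 1), (a, 1), (2 * b - a, 1 + a - b), (1 + a - b, 2 * b - a), (1, a), (1, 0)}

theorem convex_dofRegion (a b : ℝ) : Convex ℝ (dofRegion a b) := by
  simp only [dofRegion, Set.ofPred_and]
  apply_rules [Convex.inter, convex_halfSpace_le, convex_halfSpace_ge] <;>
    exact ⟨fun _ _ => by simp only [Prod.fst_add, Prod.snd_add] <;> ring,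
      fun _ _ => by simp only [Prod.smul_fst, Prod.smul_snd, smul_eq_mul] <;> ring⟩

theorem dofVertices_subset_dofRegion {a b : ℝ} (ha : 0 ≤ a) (hab : a ≤ b)
    (hb : b < (1 + 2 * a) / 3) : dofVertices a b ⊆ dofRegion a b := by
  simp only [dofVertices, Set.insert_subset_iff, Set.singleton_subset_iff, dofRegion,
    Set.mem_ofPred_eq]
  refine ⟨?_, ?_, ?_, ?_, ?_, ?_, ?_⟩ <;> refine ⟨?_, ?_, ?_, ?_, ?_, ?_, ?_⟩ <;> linarith

theorem dofRegion_subset_convexHull {a b : ℝ} (ha : 0 ≤ a) (hab : a ≤ b)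
    (hb : b < (1 + 2 * a) / 3) : dofRegion a b ⊆ convexHull ℝ (dofVertices a b) := by
  have triangle_subset : ∀ u ∈ dofVertices a b, ∀ v ∈ dofVertices a b,
      convexHull ℝ {0, u, v} ⊆ convexHull ℝ (dofVertices a b) := fun u hu v hv =>
    convexHull_mono (Set.insert_subset (Or.inl rfl) (by simp [Set.pair_subset, *]))
  have hb' : 3 * b < 1 + 2 * a := by linarith
  rintro ⟨x, y⟩ ⟨hx₀, hy₀, hx₁, hy₁, hx₂, hy₂, hxy⟩
  rcases le_total (wedge (1, a) (x, y)) 0 with hE | hE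
  · refine triangle_subset (1, 0) (by simp [dofVertices]) (1, a) (by simp [dofVertices])
      (mem_convexHull_zero_pair_of_wedge_nonneg (c₁ := 1) (c₂ := 0) (c := 1)
        ?_ ?_ ?_ ?_ ?_ ?_ ?_ ?_)
    all_goals simp only [wedge] at *; nlinarith
  rcases le_total (wedge (1 + a - b, 2 * b - a) (x, y)) 0 with hD | hD
  · refine triangle_subset (1, a) (by simp [dofVertices])
      (1 + a - b, 2 * b - a) (by simp [dofVertices])
      (mem_convexHull_zero_pair_of_wedge_nonneg (c₁ := 2) (c₂ := 1) (c := 2 + a)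
        ?_ ?_ ?_ ?_ ?_ ?_ ?_ ?_)
    all_goals simp only [wedge] at *; nlinarith
  rcases le_total (wedge (2 * b - a, 1 + a - b) (x, y)) 0 with hC | hC
  · refine triangle_subset (1 + a - b, 2 * b - a) (by simp [dofVertices])
      (2 * b - a, 1 + a - b) (by simp [dofVertices])
      (mem_convexHull_zero_pair_of_wedge_nonneg (c₁ := 1) (c₂ := 1) (c := 1 + b)
        ?_ ?_ ?_ ?_ ?_ ?_ ?_ ?_)
    all_goals simp only [wedge] at *; nlinarith
  rcases le_total (wedge (a, 1) (x, y)) 0 with hB | hB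
  · refine triangle_subset (2 * b - a, 1 + a - b) (by simp [dofVertices])
      (a, 1) (by simp [dofVertices])
      (mem_convexHull_zero_pair_of_wedge_nonneg (c₁ := 1) (c₂ := 2) (c := 2 + a)
        ?_ ?_ ?_ ?_ ?_ ?_ ?_ ?_)
    all_goals simp only [wedge] at *; nlinarith
  · refine triangle_subset (a, 1) (by simp [dofVertices]) (0, 1) (by simp [dofVertices])
      (mem_convexHull_zero_pair_of_wedge_nonneg (c₁ := 0) (c₂ := 1) (c := 1)
        ?_ ?_ ?_ ?_ ?_ ?_ ?_ ?_)
    all_goals simp only [wedge] at *; nlinarith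

theorem stmt_3_general (a b : ℝ) (h0 : 0 ≤ a) (hab : a ≤ b)
    (hb : b < (1 + 2 * a) / 3) :
    {p : ℝ × ℝ | 0 ≤ p.1 ∧ 0 ≤ p.2 ∧ p.1 ≤ 1 ∧ p.2 ≤ 1 ∧
      2 * p.1 + p.2 ≤ 2 + a ∧ 2 * p.2 + p.1 ≤ 2 + a ∧ p.1 + p.2 ≤ 1 + b} =
    convexHull ℝ ({(0, 0), (0, 1), (a, 1), (2 * b - a, 1 + a - b),
      (1 + a - b, 2 * b - a), (1, a), (1, 0)} : Set (ℝ × ℝ)) :=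
  (dofRegion_subset_convexHull h0 hab hb).antisymm
    (convexHull_min (dofVertices_subset_dofRegion h0 hab hb) (convex_dofRegion a b))

theorem stmt_3 (a b : ℝ) (h0 : 0 ≤ a) (hab : a ≤ b) (hb1 : b ≤ 1)
    (hb : b < (1 + 2 * a) / 3) :
    {p : ℝ × ℝ | 0 ≤ p.1 ∧ 0 ≤ p.2 ∧ p.1 ≤ 1 ∧ p.2 ≤ 1 ∧
      2 * p.1 + p.2 ≤ 2 + a ∧ 2 * p.2 + p.1 ≤ 2 + a ∧ p.1 + p.2 ≤ 1 + b} =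
    convexHull ℝ ({(0, 0), (0, 1), (a, 1), (2 * b - a, 1 + a - b),
      (1 + a - b, 2 * b - a), (1, a), (1, 0)} : Set (ℝ × ℝ)) :=
  stmt_3_general a b h0 hab hb
end

section
/- For 0 ≤ ᾱ ≤ β ≤ 1: the constraint d₁+d₂ ≤ 1+β is implied by the constraints d₁ ≤ 1, d₂ ≤ 1, 2d₁+d₂ ≤ 2+ᾱ, 2d₂+d₁ ≤ 2+ᾱ (for d₁,d₂ ≥ 0) if and only if β ≥ (1+2ᾱ)/3. -/
theorem stmt_4 (a b : ℝ) (h0 : 0 ≤ a) (hab : a ≤ b) (hb1 : b ≤ 1) :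
    (∀ d1 d2 : ℝ, 0 ≤ d1 → 0 ≤ d2 → d1 ≤ 1 → d2 ≤ 1 →
      2 * d1 + d2 ≤ 2 + a → 2 * d2 + d1 ≤ 2 + a → d1 + d2 ≤ 1 + b) ↔
    b ≥ (1 + 2 * a) / 3 := by
  constructor
  · intro h
    have := h ((2+a)/3) ((2+a)/3) (by linarith) (by linarith)
      (by nlinarith [hab.trans hb1]) (by nlinarith [hab.trans hb1])
      (by linarith) (by linarith)
    linarith
  · intro hb d1 d2 _ _ _ _ h1 h2
    linarith
end

section
/- Let 0 ≤ ᾱ⁽²⁾ ≤ ᾱ⁽¹⁾ ≤ 1 with 2ᾱ⁽¹⁾ − ᾱ⁽²⁾ ≥ 1. Then the region {(d₁,d₂) : d₁,d₂ ≥ 0, d₁ ≤ 1, d₂ ≤ 1, 2d₁+d₂ ≤ 2+ᾱ⁽¹⁾, 2d₂+d₁ ≤ 2+ᾱ⁽²⁾} equals {(d₁,d₂) : d₁,d₂ ≥ 0, d₁ ≤ 1, d₂ ≤ 1, 2d₂+d₁ ≤ 2+ᾱ⁽²⁾}; i.e., the constraint involving ᾱ⁽¹⁾ is redundant and the region does not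 depend on ᾱ⁽¹⁾. -/
theorem stmt_7 (a1 a2 : ℝ) (h0 : 0 ≤ a2) (h21 : a2 ≤ a1) (h11 : a1 ≤ 1)
    (hcase : 2 * a1 - a2 ≥ 1) :
    {p : ℝ × ℝ | 0 ≤ p.1 ∧ 0 ≤ p.2 ∧ p.1 ≤ 1 ∧ p.2 ≤ 1 ∧
      2 * p.1 + p.2 ≤ 2 + a1 ∧ 2 * p.2 + p.1 ≤ 2 + a2} =
    {p : ℝ × ℝ | 0 ≤ p.1 ∧ 0 ≤ p.2 ∧ p.1 ≤ 1 ∧ p.2 ≤ 1 ∧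
      2 * p.2 + p.1 ≤ 2 + a2} := by
  ext p
  simp only [Set.mem_setOf_eq]
  constructor
  · rintro ⟨h1, h2, h3, h4, h5, h6⟩
    exact ⟨h1, h2, h3, h4, h6⟩
  · rintro ⟨h1, h2, h3, h4, h6⟩
    exact ⟨h1, h2, h3, h4, by linarith, h6⟩
end

section
/- Let 0 ≤ ᾱ⁽²⁾ ≤ ᾱ⁽¹⁾ ≤ 1 with 2ᾱ⁽¹⁾ − ᾱ⁽²⁾ ≥ 1. Then the region {(d₁,d₂) : d₁,d₂ ≥ 0, d₁ ≤ 1, d₂ ≤ 1, 2d₁+d₂ ≤ 2+ᾱ⁽¹⁾, 2d₂+d₁ ≤ 2+ᾱ⁽²⁾} equals the convex hull of (0,0), (1,0), (1, (1+ᾱ⁽²⁾)/2), (ᾱ⁽²⁾, 1), (0,1). -/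
set_option maxHeartbeats 1000000 in
theorem stmt_8 (a1 a2 : ℝ) (h0 : 0 ≤ a2) (h21 : a2 ≤ a1) (h11 : a1 ≤ 1)
    (hcase : 2 * a1 - a2 ≥ 1) :
    {p : ℝ × ℝ | 0 ≤ p.1 ∧ 0 ≤ p.2 ∧ p.1 ≤ 1 ∧ p.2 ≤ 1 ∧
      2 * p.1 + p.2 ≤ 2 + a1 ∧ 2 * p.2 + p.1 ≤ 2 + a2} =
    convexHull ℝ ({(0, 0), (1, 0), (1, (1 + a2) / 2), (a2, 1), (0, 1)} :
      Set (ℝ × ℝ)) := by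
  set S : Set (ℝ × ℝ) := {(0, 0), (1, 0), (1, (1 + a2) / 2), (a2, 1), (0, 1)} with hS
  set c : ℝ := (1 + a2) / 2 with hc
  have hc0 : 0 < c := by rw [hc]; linarith
  apply Set.Subset.antisymm
  · rintro ⟨x, y⟩ hp
    obtain ⟨hx0, hy0, hx1, hy1, h5, h6⟩ := hp
    have hconv := convex_convexHull ℝ S
    have hA : ((0:ℝ), (0:ℝ)) ∈ convexHull ℝ S := subset_convexHull ℝ S (by simp [hS])
    have hB : ((1:ℝ), (0:ℝ)) ∈ convexHull ℝ S := subset_convexHull ℝ S (by simp [hS])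
    have hC : ((1:ℝ), c) ∈ convexHull ℝ S := subset_convexHull ℝ S (by simp [hS, hc])
    have hD : ((a2:ℝ), (1:ℝ)) ∈ convexHull ℝ S := subset_convexHull ℝ S (by simp [hS])
    have hE : ((0:ℝ), (1:ℝ)) ∈ convexHull ℝ S := subset_convexHull ℝ S (by simp [hS])
    have hL : ((0:ℝ), y) ∈ convexHull ℝ S := by
      apply hconv.segment_subset hA hE
      exact ⟨1 - y, y, by linarith, hy0, by ring,
        by simp [Prod.smul_mk, Prod.mk_add_mk]⟩
    by_cases hyc : y ≤ c
    · have hR : ((1:ℝ), y) ∈ convexHull ℝ S := by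
        apply hconv.segment_subset hB hC
        refine ⟨1 - y / c, y / c, ?_, ?_, by ring, ?_⟩
        · have : y / c ≤ 1 := (div_le_one hc0).2 hyc
          linarith
        · positivity
        · simp only [Prod.smul_mk, Prod.mk_add_mk, smul_eq_mul]
          refine Prod.ext ?_ ?_ <;> simp <;> field_simp
      apply hconv.segment_subset hL hR
      exact ⟨1 - x, x, by linarith, hx0, by ring,
        by simp only [Prod.smul_mk, Prod.mk_add_mk, smul_eq_mul]
           refine Prod.ext ?_ ?_ <;> simp <;> ring⟩
    · push_neg at hyc
      have hc1 : c < 1 := lt_of_lt_of_le hyc hy1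
      have hR : ((2 + a2 - 2 * y :ℝ), y) ∈ convexHull ℝ S := by
        apply hconv.segment_subset hC hD
        refine ⟨1 - (y - c) / (1 - c), (y - c) / (1 - c), ?_, ?_, by ring, ?_⟩
        · have : (y - c) / (1 - c) ≤ 1 := by
            rw [div_le_one (by linarith)]; linarith
          linarith
        · apply div_nonneg <;> linarith
        · simp only [Prod.smul_mk, Prod.mk_add_mk, smul_eq_mul]
          have h1c : (1 : ℝ) - c ≠ 0 := by linarith
          refine Prod.ext ?_ ?_ <;> simp <;> field_simp <;> rw [hc] <;> ring
      have hxmax : 0 ≤ 2 + a2 - 2 * y := by linarith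
      rcases eq_or_lt_of_le hxmax with heq | hlt
      · have hx' : x = 0 := by linarith
        have hy' : y = 1 := by
          have ha2' : a2 = 0 := by nlinarith
          linarith
        rw [hx', hy']; exact hE
      · apply hconv.segment_subset hL hR
        refine ⟨1 - x / (2 + a2 - 2 * y), x / (2 + a2 - 2 * y), ?_, ?_, by ring, ?_⟩
        · have : x / (2 + a2 - 2 * y) ≤ 1 := by
            rw [div_le_one hlt]; linarith
          linarith
        · positivity
        · simp only [Prod.smul_mk, Prod.mk_add_mk, smul_eq_mul]
          refine Prod.ext ?_ ?_ <;> simp <;> field_simp <;> ring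
  · apply convexHull_min
    · intro q hq
      simp only [hS, Set.mem_insert_iff, Set.mem_singleton_iff] at hq
      rcases hq with rfl | rfl | rfl | rfl | rfl <;>
        refine ⟨?_, ?_, ?_, ?_, ?_, ?_⟩ <;> simp <;> linarith
    · rintro ⟨x1, y1⟩ hp ⟨x2, y2⟩ hq a b ha hb hab
      simp only [Set.mem_setOf_eq] at hp hq ⊢
      obtain ⟨p1, p2, p3, p4, p5, p6⟩ := hp
      obtain ⟨q1, q2, q3, q4, q5, q6⟩ := hq
      simp only [Prod.smul_mk, Prod.mk_add_mk, smul_eq_mul]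
      refine ⟨?_, ?_, ?_, ?_, ?_, ?_⟩
      · nlinarith [mul_nonneg ha p1, mul_nonneg hb q1]
      · nlinarith [mul_nonneg ha p2, mul_nonneg hb q2]
      · nlinarith [mul_le_mul_of_nonneg_left p3 ha, mul_le_mul_of_nonneg_left q3 hb]
      · nlinarith [mul_le_mul_of_nonneg_left p4 ha, mul_le_mul_of_nonneg_left q4 hb]
      · nlinarith [mul_le_mul_of_nonneg_left p5 ha, mul_le_mul_of_nonneg_left q5 hb]
      · nlinarith [mul_le_mul_of_nonneg_left p6 ha, mul_le_mul_of_nonneg_left q6 hb]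
end

section
/- Let 0 ≤ ᾱ' < ᾱ ≤ 1, where 2ᾱ − ᾱ' < 1. The maximal d₂ with (d,d₂) in the region {d₁≤1, d₂≤1, 2d₁+d₂ ≤ 2+ᾱ, 2d₂+d₁ ≤ 2+ᾱ'} for d = (2+ᾱ)/3 equals (2+ᾱ'−d)/2 = (2+ᾱ')/3 − (ᾱ−ᾱ')/6, which is strictly less than (2+ᾱ')/3. -/
theorem stmt_9 (a a' : ℝ) (h0 : 0 ≤ a') (h' : a' < a) (h1 : a ≤ 1)
    (hcase : 2 * a - a' < 1) :
    IsGreatest {d2 : ℝ | (2 + a) / 3 ≤ 1 ∧ d2 ≤ 1 ∧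
        2 * ((2 + a) / 3) + d2 ≤ 2 + a ∧ 2 * d2 + (2 + a) / 3 ≤ 2 + a'}
      ((2 + a' - (2 + a) / 3) / 2) ∧
    (2 + a' - (2 + a) / 3) / 2 = (2 + a') / 3 - (a - a') / 6 ∧
    (2 + a' - (2 + a) / 3) / 2 < (2 + a') / 3 := by
  refine ⟨⟨⟨by linarith, by linarith, by linarith, by linarith⟩,
    fun x hx => ?_⟩, by ring, by linarith⟩
  obtain ⟨_, _, _, h4⟩ := hx
  linarith
end

section
/- Under the same setup (0 < μ < 1, μ = (ᾱ⁽¹⁾−ᾱ⁽²⁾+2Δ)/(1−ᾱ⁽¹⁾−Δ), ε₁ = (2−ᾱ⁽¹⁾−ᾱ⁽²⁾)/(1−ᾱ⁽¹⁾−Δ)), the limit as S → ∞ of d₂ = ᾱ⁽¹⁾ + 2Δ + [T₁(2−2ᾱ⁽¹⁾−2Δ) + T_S(ᾱ⁽²⁾−ᾱ⁽¹⁾−2Δ)] / (Σ_{i=1}^S T_i) equals (2+2ᾱ⁽²⁾−ᾱ⁽¹⁾)/3. -/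
/-!
Up to the factor `T₁`, the sum `∑_{i=2}^{S-1} T_i` is a partial sum of the geometric series
`ε₁ ∑ μ^k`, so it tends to `ε₁ / (1 - μ)`, while `T_S` is a multiple of `μ^{S-3} → 0`.
Hence `d₂` tends to `ᾱ⁽¹⁾ + 2Δ + (2 - 2ᾱ⁽¹⁾ - 2Δ) / (1 + ε₁ / (1 - μ))`, and substituting the
values of `μ` and `ε₁` gives `1 + ε₁ / (1 - μ) = 3 (1 - ᾱ⁽¹⁾ - Δ) / (1 - 2ᾱ⁽¹⁾ + ᾱ⁽²⁾ - 3Δ)`.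
-/

open Filter Finset Topology

lemma Finset.sum_Icc_two_pow_sub_two {R : Type*} [Semiring R] (μ : R) (S : ℕ) :
    ∑ i ∈ Icc 2 (S - 1), μ ^ (i - 2) = ∑ i ∈ range (S - 2), μ ^ i := by
  have hIcc : Icc 2 (S - 1) = Ico 2 S := by ext; simp only [mem_Icc, mem_Ico]; omega
  rw [hIcc, sum_Ico_eq_sum_range]
  simp only [Nat.add_sub_cancel_left]

lemma tendsto_sum_Icc_two_pow_sub_two {K : Type*} [NormedDivisionRing K] [CompleteSpace K]
    {μ : K} (hμ : ‖μ‖ < 1) :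
    Tendsto (fun S : ℕ => ∑ i ∈ Icc 2 (S - 1), μ ^ (i - 2)) atTop (𝓝 (1 - μ)⁻¹) := by
  simp only [sum_Icc_two_pow_sub_two]
  exact (hasSum_geometric_of_norm_lt_one hμ).tendsto_sum_nat.comp (tendsto_sub_atTop_nat 2)

lemma one_sub_eq_of_eq_div {Δ a1 a2 μ : ℝ} (hD : 1 - a1 - Δ ≠ 0)
    (hμ : μ = (a1 - a2 + 2 * Δ) / (1 - a1 - Δ)) :
    1 - μ = (1 - 2 * a1 + a2 - 3 * Δ) / (1 - a1 - Δ) := by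
  rw [hμ]; field_simp; ring

lemma one_add_mul_inv_one_sub_eq {e1 Δ a1 a2 μ : ℝ} (hD : 1 - a1 - Δ ≠ 0)
    (hK : 1 - 2 * a1 + a2 - 3 * Δ ≠ 0) (hμ : μ = (a1 - a2 + 2 * Δ) / (1 - a1 - Δ))
    (he1def : e1 = (2 - a1 - a2) / (1 - a1 - Δ)) :
    1 + e1 * (1 - μ)⁻¹ = 3 * (1 - a1 - Δ) / (1 - 2 * a1 + a2 - 3 * Δ) := by
  rw [one_sub_eq_of_eq_div hD hμ, he1def, inv_div, div_mul_div_cancel₀ hD, one_add_div hK]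
  ring

theorem stmt_11_general (T1 e1 e2 Δ a1 a2 μ : ℝ)
    (hT1 : 0 < T1)
    (hμ0 : 0 < μ) (hμ1 : μ < 1)
    (hμ : μ = (a1 - a2 + 2 * Δ) / (1 - a1 - Δ))
    (he1def : e1 = (2 - a1 - a2) / (1 - a1 - Δ)) :
    Tendsto (fun S : ℕ =>
        a1 + 2 * Δ +
          (T1 * (2 - 2 * a1 - 2 * Δ) + (T1 * e1 * μ ^ (S - 3) * e2) * (a2 - a1 - 2 * Δ)) /
            (T1 + (∑ i ∈ Finset.Icc 2 (S - 1), T1 * e1 * μ ^ (i - 2)) +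
              T1 * e1 * μ ^ (S - 3) * e2))
      atTop (nhds ((2 + 2 * a2 - a1) / 3)) := by
  -- `μ ≠ 0` rules out the junk value `x / 0 = 0` in the definition of `μ`.
  have hD : 1 - a1 - Δ ≠ 0 := (div_ne_zero_iff.mp (hμ ▸ hμ0.ne')).2
  have hK : 1 - 2 * a1 + a2 - 3 * Δ ≠ 0 :=
    (div_ne_zero_iff.mp (one_sub_eq_of_eq_div hD hμ ▸ sub_ne_zero.2 hμ1.ne')).1
  have hratio := one_add_mul_inv_one_sub_eq hD hK hμ he1def
  have hgeom : Tendsto (fun S : ℕ => ∑ i ∈ Icc 2 (S - 1), μ ^ (i - 2)) atTop (𝓝 (1 - μ)⁻¹) :=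
    tendsto_sum_Icc_two_pow_sub_two (by rwa [Real.norm_of_nonneg hμ0.le])
  have htail : Tendsto (fun S : ℕ => μ ^ (S - 3)) atTop (𝓝 0) :=
    (tendsto_pow_atTop_nhds_zero_of_lt_one hμ0.le hμ1).comp (tendsto_sub_atTop_nat 3)
  have hden : T1 + T1 * e1 * (1 - μ)⁻¹ + T1 * e1 * 0 * e2 =
      T1 * (3 * (1 - a1 - Δ) / (1 - 2 * a1 + a2 - 3 * Δ)) := by
    rw [mul_zero, zero_mul, add_zero, mul_assoc, ← mul_one_add, hratio]
  have hden_ne : T1 + T1 * e1 * (1 - μ)⁻¹ + T1 * e1 * 0 * e2 ≠ 0 := by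
    rw [hden]
    exact mul_ne_zero hT1.ne' (div_ne_zero (mul_ne_zero three_ne_zero hD) hK)
  have hvalue : (2 + 2 * a2 - a1) / 3 = a1 + 2 * Δ +
      (T1 * (2 - 2 * a1 - 2 * Δ) + T1 * e1 * 0 * e2 * (a2 - a1 - 2 * Δ)) /
        (T1 + T1 * e1 * (1 - μ)⁻¹ + T1 * e1 * 0 * e2) := by
    rw [hden, mul_zero, zero_mul, zero_mul, add_zero, mul_div_mul_left _ _ hT1.ne']
    field_simp
    ring
  simp only [← Finset.mul_sum]
  rw [hvalue]
  exact tendsto_const_nhds.add <|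
    (tendsto_const_nhds.add (((htail.const_mul (T1 * e1)).mul_const e2).mul_const _)).div
      ((tendsto_const_nhds.add (hgeom.const_mul (T1 * e1))).add
        ((htail.const_mul (T1 * e1)).mul_const e2)) hden_ne

theorem stmt_11 (T1 e1 e2 Δ a1 a2 μ : ℝ)
    (hT1 : 0 < T1) (he1 : 0 < e1) (he2 : 0 < e2) (hΔ : 0 < Δ)
    (ha2 : 0 ≤ a2) (ha21 : a2 ≤ a1) (ha1 : a1 ≤ 1)
    (hμ0 : 0 < μ) (hμ1 : μ < 1)
    (hμ : μ = (a1 - a2 + 2 * Δ) / (1 - a1 - Δ))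
    (he1def : e1 = (2 - a1 - a2) / (1 - a1 - Δ))
    (he2def : e2 = (a1 - a2 + 2 * Δ) / (1 - a2)) :
    Tendsto (fun S : ℕ =>
        a1 + 2 * Δ +
          (T1 * (2 - 2 * a1 - 2 * Δ) + (T1 * e1 * μ ^ (S - 3) * e2) * (a2 - a1 - 2 * Δ)) /
            (T1 + (∑ i ∈ Finset.Icc 2 (S - 1), T1 * e1 * μ ^ (i - 2)) +
              T1 * e1 * μ ^ (S - 3) * e2))
      atTop (nhds ((2 + 2 * a2 - a1) / 3)) :=
  stmt_11_general T1 e1 e2 Δ a1 a2 μ hT1 hμ0 hμ1 hμ he1def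
end
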